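/- In A₀, for every s ≥ 1 one has (ij)^s · j = i^s j^(s+1) and i · (ij)^s = i^(s+1) j^s. -/
import Mathlib


open FreeAlgebra

noncomputable section

/-- Defining relations for the specialisation at `q = 0` of the generic composition
algebra of the Kronecker quiver, on generators `i = ι ℚ 0` and `j = ι ℚ 1`:
(1) `i^m j^(m+1) i^(m+1) j^(m+2) = i^(2m+1) j^(2m+3)` for all `m ≥ 0`;
(2) `i^(n+2) j^(n+1) i^(n+1) j^n = i^(2n+3) j^(2n+1)` for all `n ≥ 0`;
(3) `(i^m j^m)(i^n j^n) = (i^n j^n)(i^m j^m)` for all `m, n ≥ 1`. -/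
inductive KroneckerRel0 : FreeAlgebra ℚ (Fin 2) → FreeAlgebra ℚ (Fin 2) → Prop
  | preproj (m : ℕ) :
      KroneckerRel0
        (ι ℚ 0 ^ m * ι ℚ 1 ^ (m + 1) * (ι ℚ 0 ^ (m + 1) * ι ℚ 1 ^ (m + 2)))
        (ι ℚ 0 ^ (2 * m + 1) * ι ℚ 1 ^ (2 * m + 3))
  | preinj (n : ℕ) :
      KroneckerRel0
        (ι ℚ 0 ^ (n + 2) * ι ℚ 1 ^ (n + 1) * (ι ℚ 0 ^ (n + 1) * ι ℚ 1 ^ n))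
        (ι ℚ 0 ^ (2 * n + 3) * ι ℚ 1 ^ (2 * n + 1))
  | deltaComm (m n : ℕ) (hm : 1 ≤ m) (hn : 1 ≤ n) :
      KroneckerRel0
        (ι ℚ 0 ^ m * ι ℚ 1 ^ m * (ι ℚ 0 ^ n * ι ℚ 1 ^ n))
        (ι ℚ 0 ^ n * ι ℚ 1 ^ n * (ι ℚ 0 ^ m * ι ℚ 1 ^ m))

/-- `A₀`, the composition algebra of the Kronecker quiver specialised at `q = 0`,
presented by generators `i, j` and the relations above. -/
abbrev A0 : Type := RingQuot KroneckerRel0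

/-- The generator `i` of `A₀`. -/
def iA : A0 := RingQuot.mkAlgHom ℚ KroneckerRel0 (ι ℚ 0)

/-- The generator `j` of `A₀`. -/
def jA : A0 := RingQuot.mkAlgHom ℚ KroneckerRel0 (ι ℚ 1)

/-- The commutator `ij - ji` in `A₀`. -/
def cA : A0 := iA * jA - jA * iA

/-- `P(m) = (ij - ji)^m j` in `A₀`. -/
def PA (m : ℕ) : A0 := cA ^ m * jA

/-- `I(n) = i (ij - ji)^n` in `A₀`. -/
def IA (n : ℕ) : A0 := iA * cA ^ n

/-- `R(1) = ij - ji` and `R(s+1) = i (ij - ji)^s j` for `s ≥ 1` in `A₀`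
(the value at `0` is junk). -/
def RA : ℕ → A0
  | 0 => 0
  | 1 => cA
  | (s + 2) => iA * cA ^ (s + 1) * jA

/-- `δ_m = i^m j^m` in `A₀`. -/
def deltaA (m : ℕ) : A0 := iA ^ m * jA ^ m

lemma key1 : jA * (iA * jA ^ 2) = iA * jA ^ 3 := by
  have h := RingQuot.mkAlgHom_rel ℚ (KroneckerRel0.preproj 0)
  simpa [iA, jA, pow_zero, pow_one, one_mul, map_mul, map_pow] using h

lemma key2 : iA ^ 2 * jA * (iA * 1) = iA ^ 3 * jA := by
  have h := RingQuot.mkAlgHom_rel ℚ (KroneckerRel0.preinj 0)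
  simpa [iA, jA, pow_zero, pow_one, mul_one, map_mul, map_pow] using h

lemma key1' (t : ℕ) : jA * (iA * jA ^ (t + 2)) = iA * jA ^ (t + 3) := by
  have := congrArg (· * jA ^ t) key1
  simpa [mul_assoc, ← pow_add, show 2 + t = t + 2 from by ring,
    show 3 + t = t + 3 from by ring] using this

lemma key2' (t : ℕ) : iA ^ (t + 2) * jA * iA = iA ^ (t + 3) * jA := by
  have := congrArg (iA ^ t * ·) key2
  simpa [mul_one, ← mul_assoc, ← pow_add, show t + 2 = 2 + t from by ring,
    show t + 3 = 3 + t from by ring] using this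

lemma moveJ (k t : ℕ) : jA ^ k * (iA * jA ^ (t + 2)) = iA * jA ^ (t + 2 + k) := by
  induction k generalizing t with
  | zero => simp
  | succ k ih =>
      have : jA ^ (k + 1) * (iA * jA ^ (t + 2)) = jA ^ k * (jA * (iA * jA ^ (t + 2))) := by
        rw [pow_succ, mul_assoc]
      rw [this, key1' t, show t + 3 = (t + 1) + 2 from rfl, ih (t + 1)]
      ring_nf

lemma moveI (k t : ℕ) : iA ^ (t + 2) * jA * iA ^ k = iA ^ (t + 2 + k) * jA := by
  induction k generalizing t with
  | zero => simp
  | succ k ih =>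
      have : iA ^ (t + 2) * jA * iA ^ (k + 1) = iA ^ (t + 2) * jA * iA * iA ^ k := by
        rw [pow_succ' iA k, ← mul_assoc]
      rw [this, key2' t, show t + 3 = (t + 1) + 2 from rfl, ih (t + 1)]
      ring_nf

lemma comm1 (s : ℕ) (hs : 1 ≤ s) :
    iA * jA * (iA ^ s * jA ^ s) = iA ^ s * jA ^ s * (iA * jA) := by
  have h := RingQuot.mkAlgHom_rel ℚ (KroneckerRel0.deltaComm 1 s le_rfl hs)
  simpa [iA, jA, pow_one, map_mul, map_pow] using h

/-- In `A₀`, for every `s ≥ 1` one has `(ij)^s j = i^s j^(s+1)` and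
`i (ij)^s = i^(s+1) j^s`. -/
theorem power_of_delta_times_generator (s : ℕ) (hs : 1 ≤ s) :
    (iA * jA) ^ s * jA = iA ^ s * jA ^ (s + 1) ∧
    iA * (iA * jA) ^ s = iA ^ (s + 1) * jA ^ s := by
  induction s, hs using Nat.le_induction with
  | base => constructor <;> simp [pow_succ, pow_one, mul_assoc]
  | succ s hs ih =>
      obtain ⟨hP, hQ⟩ := ih
      constructor
      · have e1 : (iA * jA) ^ (s + 1) * jA = iA * jA * ((iA * jA) ^ s * jA) := by
          rw [pow_succ']; simp [mul_assoc]
        rw [e1, hP]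
        have e2 : iA * jA * (iA ^ s * jA ^ (s + 1)) =
            iA * jA * (iA ^ s * jA ^ s) * jA := by
          rw [pow_succ jA s]; simp [mul_assoc]
        rw [e2, comm1 s hs]
        cases s with
        | zero => omega
        | succ t =>
            have e3 : iA ^ (t + 1) * jA ^ (t + 1) * (iA * jA) * jA =
                iA ^ (t + 1) * (jA ^ (t + 1) * (iA * jA ^ (0 + 2))) := by
              rw [show (0 : ℕ) + 2 = 2 from rfl, pow_two]; simp [mul_assoc]
            rw [e3, moveJ (t + 1) 0,
              show (0 : ℕ) + 2 + (t + 1) = t + 1 + 1 + 1 from by ring,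
              pow_succ iA (t + 1), mul_assoc]
      · have e1 : iA * (iA * jA) ^ (s + 1) = iA * (iA * jA) ^ s * (iA * jA) := by
          rw [pow_succ, ← mul_assoc]
        rw [e1, hQ]
        have e2 : iA ^ (s + 1) * jA ^ s * (iA * jA) =
            iA * (iA ^ s * jA ^ s * (iA * jA)) := by
          rw [pow_succ' iA s]; simp [mul_assoc]
        rw [e2, ← comm1 s hs]
        have e3 : iA * (iA * jA * (iA ^ s * jA ^ s)) =
            iA ^ (0 + 2) * jA * iA ^ s * jA ^ s := by
          rw [show (0 : ℕ) + 2 = 2 from rfl, pow_two]; simp [mul_assoc]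
        rw [e3, moveI s 0,
          show (0 : ℕ) + 2 + s = s + 1 + 1 from by ring,
          pow_succ' jA s]
        simp [mul_assoc]
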